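/- arXiv:1408.5820 — 4 statements merged into one kernel-verified Lean document; each statement's English description precedes it below -/
import Mathlib

section
/- Let M be an m×p matrix with ‖M‖_∞ = max_{i,j}|M_{ij}| ≤ 2L and define T_i = (Y_i − M⁰_{X_i})² − (Y_i − M_{X_i})² for i = 1,…,n. Then Σ_{i=1}^n E[T_i²] ≤ n (8σ² + 2(3L)²)(R(M) − R(M⁰)). -/
open MeasureTheory ProbabilityTheory
open scoped ENNReal BigOperators

noncomputable section

/-- The uniform distribution on the interval `[-a, a]` (Dirac mass at `0` when `a = 0`). -/
def unifIcc (a : ℝ) : Measure ℝ :=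
  if a = 0 then Measure.dirac 0
  else (ENNReal.ofReal (2 * a))⁻¹ • volume.restrict (Set.Icc (-a) a)

/-- Prior on an `m × K` factor matrix: entries of the first `k` columns are i.i.d. uniform on
`[-δ, δ]`, the remaining entries are i.i.d. uniform on `[-κ, κ]`. -/
def factorPrior (m K : ℕ) (δ κ : ℝ) (k : ℕ) : Measure (Fin m → Fin K → ℝ) :=
  Measure.pi fun _ : Fin m => Measure.pi fun ℓ : Fin K =>
    if (ℓ : ℕ) < k then unifIcc δ else unifIcc κ

/-- The matrix product `U Vᵀ`, written entrywise. -/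
def matMul {m p K : ℕ} (U : Fin m → Fin K → ℝ) (V : Fin p → Fin K → ℝ) :
    Fin m → Fin p → ℝ := fun i j => ∑ ℓ, U i ℓ * V j ℓ

/-- The prior `π` on pairs of factors `(U, V)`: the rank parameter `k ∈ {1, …, K}` has
probability `τ^(k-1) (1-τ)/(1-τ^K)` and, given `k`, `U` and `V` are drawn from `factorPrior`
with `δ = √(2L/K)`. -/
def pairPrior (m p K : ℕ) (L τ κ : ℝ) :
    Measure ((Fin m → Fin K → ℝ) × (Fin p → Fin K → ℝ)) :=
  ∑ k ∈ Finset.range K,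
    ENNReal.ofReal (τ ^ k * (1 - τ) / (1 - τ ^ K)) •
      ((factorPrior m K (Real.sqrt (2 * L / K)) κ (k + 1)).prod
        (factorPrior p K (Real.sqrt (2 * L / K)) κ (k + 1)))

/-- The prior `π` on `m × p` matrices: the image of `pairPrior` under `(U, V) ↦ U Vᵀ`. -/
def matPrior (m p K : ℕ) (L τ κ : ℝ) : Measure (Fin m → Fin p → ℝ) :=
  (pairPrior m p K L τ κ).map fun UV => matMul UV.1 UV.2

/-- The Gibbs posterior `ρ̂_λ`, with density `e^{-λ r(M)} / ∫ e^{-λ r} dπ` w.r.t. `π`. -/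
def gibbs {A : Type*} [MeasurableSpace A] (π : Measure A) (lam : ℝ) (r : A → ℝ) :
    Measure A :=
  π.withDensity fun M =>
    ENNReal.ofReal (Real.exp (-lam * r M)) /
      ∫⁻ M', ENNReal.ofReal (Real.exp (-lam * r M')) ∂π

/-- The mean of the Gibbs posterior, i.e. the estimator `M̂_λ = ∫ M ρ̂_λ(dM)` (entrywise). -/
def gibbsMean {m p : ℕ} (π : Measure (Fin m → Fin p → ℝ)) (lam : ℝ)
    (r : (Fin m → Fin p → ℝ) → ℝ) : Fin m → Fin p → ℝ :=
  fun i j => ∫ A, A i j ∂(gibbs π lam r)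

/-- Kullback–Leibler divergence `K(ρ, π) = ∫ log (dρ/dπ) dρ`. -/
def KLdiv {A : Type*} [MeasurableSpace A] (ρ π : Measure A) : ℝ :=
  ∫ x, Real.log ((ρ.rnDeriv π x).toReal) ∂ρ

/-- Empirical risk `r(M) = (1/n) ∑ (Yᵢ - M_{Xᵢ})²`. -/
def empRisk {Ω : Type*} {m p n : ℕ} (X : Fin n → Ω → Fin m × Fin p)
    (Y : Fin n → Ω → ℝ) (ω : Ω) (A : Fin m → Fin p → ℝ) : ℝ :=
  (1 / (n : ℝ)) * ∑ i, (Y i ω - A (X i ω).1 (X i ω).2) ^ 2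

/-- Prediction risk `R(M) = E[(Y - M_X)²]`, computed from the sample indexed by `i₀`
(by the i.i.d. assumption, any index gives the same value). -/
def predRisk {Ω : Type*} [MeasurableSpace Ω] {m p n : ℕ} (P : Measure Ω)
    (X : Fin n → Ω → Fin m × Fin p) (Y : Fin n → Ω → ℝ) (i₀ : Fin n)
    (A : Fin m → Fin p → ℝ) : ℝ :=
  ∫ ω, (Y i₀ ω - A (X i₀ ω).1 (X i₀ ω).2) ^ 2 ∂P

/-- The sampling distribution `Π_{ij} = P(X = (i,j))`. -/
def samplingProb {Ω : Type*} [MeasurableSpace Ω] {m p n : ℕ} (P : Measure Ω)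
    (X : Fin n → Ω → Fin m × Fin p) (i₀ : Fin n) : Fin m → Fin p → ℝ :=
  fun i j => (P {ω | X i₀ ω = (i, j)}).toReal

/-- Generalized square Frobenius norm `‖A‖²_{F,Π} = ∑_{ij} A_{ij}² Π_{ij}`. -/
def genFrobSq {m p : ℕ} (Pi : Fin m → Fin p → ℝ) (A : Fin m → Fin p → ℝ) : ℝ :=
  ∑ i, ∑ j, (A i j) ^ 2 * Pi i j

/-- The set `𝓜(x)` of matrices `M = U Vᵀ` with all factor entries bounded by `√(x/K)`. -/
def lowNormSet (m p K : ℕ) (x : ℝ) : Set (Fin m → Fin p → ℝ) :=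
  {A | ∃ U : Fin m → Fin K → ℝ, ∃ V : Fin p → Fin K → ℝ,
    (∀ i ℓ, |U i ℓ| ≤ Real.sqrt (x / K)) ∧ (∀ j ℓ, |V j ℓ| ≤ Real.sqrt (x / K)) ∧
    A = matMul U V}

/-- The rank of a matrix given as a function. -/
def rk {m p : ℕ} (A : Fin m → Fin p → ℝ) : ℕ := (Matrix.of A).rank

end

/-!
Write `D = M⁰ - M` and `εᵢ = Yᵢ - M⁰_{Xᵢ}`. Then `Tᵢ = -(2 εᵢ D_{Xᵢ} + D_{Xᵢ}²)`, so
`Tᵢ² ≤ 8 εᵢ² D_{Xᵢ}² + 2 (3L)² D_{Xᵢ}²` because `|D| ≤ 3L`. Since `εᵢ` is independent of `Xᵢ`,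
`E[εᵢ² D_{Xᵢ}²] = E[εᵢ²] E[D_{Xᵢ}²] ≤ σ² E[D_{Xᵢ}²]`, while the centring of the noise kills the
cross term in `R(M) = E[(ε + D_X)²]`, giving `R(M) - R(M⁰) = E[D_X²]`;
by identical distribution, `E[D_{Xᵢ}²]` does not depend on `i`.
-/

lemma sq_sub_add_sq_sq_le {e d C : ℝ} (hd : |d| ≤ C) :
    (e ^ 2 - (e + d) ^ 2) ^ 2 ≤ 8 * (e ^ 2 * d ^ 2) + 2 * C ^ 2 * d ^ 2 := by
  have hd2 : d ^ 2 ≤ C ^ 2 := by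
    simpa only [sq_abs] using pow_le_pow_left₀ (abs_nonneg d) hd 2
  calc (e ^ 2 - (e + d) ^ 2) ^ 2 = (2 * e * d + d ^ 2) ^ 2 := by ring
    _ ≤ 2 * ((2 * e * d) ^ 2 + (d ^ 2) ^ 2) := add_sq_le
    _ = 8 * (e ^ 2 * d ^ 2) + 2 * d ^ 2 * d ^ 2 := by ring
    _ ≤ 8 * (e ^ 2 * d ^ 2) + 2 * C ^ 2 * d ^ 2 := by gcongr

section

variable {Ω : Type*} [MeasurableSpace Ω] {P : Measure Ω} [IsFiniteMeasure P]
  {ε d : Ω → ℝ} {C : ℝ}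

lemma integrable_sq_of_abs_le (hd : AEStronglyMeasurable d P) (hdC : ∀ ω, |d ω| ≤ C) :
    Integrable (fun ω => d ω ^ 2) P :=
  (integrable_const (C ^ 2)).mono' (hd.pow 2) <| .of_forall fun ω => by
    simpa only [Real.norm_eq_abs, abs_pow] using pow_le_pow_left₀ (abs_nonneg _) (hdC ω) 2

lemma ProbabilityTheory.IndepFun.integral_sq_sub_add_sq_sq_le (hind : IndepFun ε d P)
    (hε : MemLp ε 2 P) (hd : AEStronglyMeasurable d P) (hdC : ∀ ω, |d ω| ≤ C) :
    ∫ ω, (ε ω ^ 2 - (ε ω + d ω) ^ 2) ^ 2 ∂P ≤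
      (8 * ∫ ω, ε ω ^ 2 ∂P + 2 * C ^ 2) * ∫ ω, d ω ^ 2 ∂P := by
  have hd2 := integrable_sq_of_abs_le hd hdC
  have hεd2 : Integrable (fun ω => ε ω ^ 2 * d ω ^ 2) P := by
    refine hε.integrable_sq.mul_bdd (hd.pow 2) (c := C ^ 2) (.of_forall fun ω => ?_)
    simpa only [Real.norm_eq_abs, abs_pow] using pow_le_pow_left₀ (abs_nonneg _) (hdC ω) 2
  have hsplit : ∫ ω, ε ω ^ 2 * d ω ^ 2 ∂P = (∫ ω, ε ω ^ 2 ∂P) * ∫ ω, d ω ^ 2 ∂P :=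
    (hind.comp (measurable_id.pow_const 2) (measurable_id.pow_const 2))
      |>.integral_mul_eq_mul_integral (hε.1.pow 2) (hd.pow 2)
  calc ∫ ω, (ε ω ^ 2 - (ε ω + d ω) ^ 2) ^ 2 ∂P
      ≤ ∫ ω, 8 * (ε ω ^ 2 * d ω ^ 2) + 2 * C ^ 2 * d ω ^ 2 ∂P :=
        integral_mono_of_nonneg (.of_forall fun _ => sq_nonneg _)
          ((hεd2.const_mul 8).add (hd2.const_mul _))
          (.of_forall fun ω => sq_sub_add_sq_sq_le (hdC ω))
    _ = (8 * ∫ ω, ε ω ^ 2 ∂P + 2 * C ^ 2) * ∫ ω, d ω ^ 2 ∂P := by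
        rw [integral_add (hεd2.const_mul 8) (hd2.const_mul _), integral_const_mul,
          integral_const_mul, hsplit]
        ring

lemma ProbabilityTheory.IndepFun.integral_add_sq (hind : IndepFun ε d P) (hε : MemLp ε 2 P)
    (hmean : ∫ ω, ε ω ∂P = 0) (hd : AEStronglyMeasurable d P) (hdC : ∀ ω, |d ω| ≤ C) :
    ∫ ω, (ε ω + d ω) ^ 2 ∂P = ∫ ω, ε ω ^ 2 ∂P + ∫ ω, d ω ^ 2 ∂P := by
  have hεd : Integrable (fun ω => ε ω * d ω) P :=
    (hε.integrable one_le_two).mul_bdd hd (c := C) (.of_forall fun ω => hdC ω)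
  have hcross : ∫ ω, ε ω * d ω ∂P = 0 := by
    simpa only [Pi.mul_apply, hmean, zero_mul] using hind.integral_mul_eq_mul_integral hε.1 hd
  calc ∫ ω, (ε ω + d ω) ^ 2 ∂P = ∫ ω, ε ω ^ 2 + 2 * (ε ω * d ω) + d ω ^ 2 ∂P := by
        congr 1 with ω; ring
    _ = ∫ ω, ε ω ^ 2 ∂P + ∫ ω, d ω ^ 2 ∂P := by
        have hε2 := hε.integrable_sq
        rw [integral_add (f := fun ω => ε ω ^ 2 + 2 * (ε ω * d ω))
            (hε2.add (hεd.const_mul 2)) (integrable_sq_of_abs_le hd hdC),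
          integral_add hε2 (hεd.const_mul 2), integral_const_mul, hcross, mul_zero, add_zero]

end

theorem second_moment_bound_general
    (m p n : ℕ) (hn : 0 < n)
    (L σ : ℝ)
    {Ω : Type*} [MeasurableSpace Ω] (P : Measure Ω) [IsProbabilityMeasure P]
    (X : Fin n → Ω → Fin m × Fin p) (hX : ∀ i, Measurable (X i))
    (E : Fin n → Ω → ℝ) (hE : ∀ i, Measurable (E i))
    (M0 : Fin m → Fin p → ℝ) (hM0 : ∀ i j, |M0 i j| ≤ L)
    (Y : Fin n → Ω → ℝ) (hY : ∀ i ω, Y i ω = M0 (X i ω).1 (X i ω).2 + E i ω)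
    (hident : ∀ i j : Fin n,
      IdentDistrib (fun ω => (X i ω, Y i ω)) (fun ω => (X j ω, Y j ω)) P P)
    (hnoiseXindep : IndepFun (fun ω => fun i => E i ω) (fun ω => fun i => X i ω) P)
    (hmean : ∀ i, ∫ ω, E i ω ∂P = 0)
    (hmom2 : ∀ i, ∫ ω, (E i ω) ^ 2 ∂P ≤ σ ^ 2)
    (hmomint : ∀ (i : Fin n) (k : ℕ), Integrable (fun ω => |E i ω| ^ k) P)
    (M : Fin m → Fin p → ℝ) (hM : ∀ i j, |M i j| ≤ 2 * L) :
    ∑ i, ∫ ω, ((Y i ω - M0 (X i ω).1 (X i ω).2) ^ 2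
        - (Y i ω - M (X i ω).1 (X i ω).2) ^ 2) ^ 2 ∂P ≤
      (n : ℝ) * (8 * σ ^ 2 + 2 * (3 * L) ^ 2) *
        (predRisk P X Y ⟨0, hn⟩ M - predRisk P X Y ⟨0, hn⟩ M0) := by
  let D : Fin m × Fin p → ℝ := fun x => M0 x.1 x.2 - M x.1 x.2
  have hDC (x : Fin m × Fin p) : |D x| ≤ 3 * L :=
    (abs_sub _ _).trans (by linarith [hM0 x.1 x.2, hM x.1 x.2])
  have hD (i : Fin n) : AEStronglyMeasurable (fun ω => D (X i ω)) P :=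
    ((measurable_of_countable D).comp (hX i)).aestronglyMeasurable
  have hind (i : Fin n) : IndepFun (E i) (fun ω => D (X i ω)) P :=
    hnoiseXindep.comp (measurable_pi_apply i)
      ((measurable_of_countable D).comp (measurable_pi_apply i))
  have hE2 (i : Fin n) : MemLp (E i) 2 P :=
    (memLp_two_iff_integrable_sq (hE i).aestronglyMeasurable).2
      (by simpa only [sq_abs] using hmomint i 2)
  have hresid0 (i : Fin n) (ω : Ω) : Y i ω - M0 (X i ω).1 (X i ω).2 = E i ω := by
    rw [hY]; ring
  have hresid (i : Fin n) (ω : Ω) : Y i ω - M (X i ω).1 (X i ω).2 = E i ω + D (X i ω) := by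
    rw [hY]; ring
  have hsame (i : Fin n) : ∫ ω, D (X i ω) ^ 2 ∂P = ∫ ω, D (X ⟨0, hn⟩ ω) ^ 2 ∂P :=
    ((hident i ⟨0, hn⟩).comp measurable_fst).comp (measurable_of_countable fun x => D x ^ 2)
      |>.integral_eq
  have hrisk : predRisk P X Y ⟨0, hn⟩ M - predRisk P X Y ⟨0, hn⟩ M0 =
      ∫ ω, D (X ⟨0, hn⟩ ω) ^ 2 ∂P := by
    rw [predRisk, predRisk]
    simp only [hresid0, hresid]
    rw [(hind _).integral_add_sq (hE2 _) (hmean _) (hD _) fun ω => hDC _]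
    ring
  calc _ = ∑ i, ∫ ω, (E i ω ^ 2 - (E i ω + D (X i ω)) ^ 2) ^ 2 ∂P := by
        simp only [hresid0, hresid]
    _ ≤ ∑ i, (8 * σ ^ 2 + 2 * (3 * L) ^ 2) * ∫ ω, D (X i ω) ^ 2 ∂P :=
        Finset.sum_le_sum fun i _ =>
          ((hind i).integral_sq_sub_add_sq_sq_le (hE2 i) (hD i) fun ω => hDC _).trans <|
            mul_le_mul_of_nonneg_right (by linarith [hmom2 i])
              (integral_nonneg fun _ => sq_nonneg _)
    _ = _ := by
        simp only [hsame, hrisk, Finset.sum_const, Finset.card_univ, Fintype.card_fin, nsmul_eq_mul]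
        ring

/-- Variance bound for `Tᵢ = (Yᵢ - M⁰_{Xᵢ})² - (Yᵢ - M_{Xᵢ})²`:
`∑ E[Tᵢ²] ≤ n (8σ² + 2(3L)²) (R(M) - R(M⁰))`. -/
theorem second_moment_bound
    (m p n : ℕ) (hm : 0 < m) (hp : 0 < p) (hn : 0 < n)
    (L σ ξ : ℝ) (hL : 0 < L) (hσ : 0 < σ) (hξ : 0 < ξ)
    {Ω : Type*} [MeasurableSpace Ω] (P : Measure Ω) [IsProbabilityMeasure P]
    (X : Fin n → Ω → Fin m × Fin p) (hX : ∀ i, Measurable (X i))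
    (E : Fin n → Ω → ℝ) (hE : ∀ i, Measurable (E i))
    (M0 : Fin m → Fin p → ℝ) (hM0 : ∀ i j, |M0 i j| ≤ L)
    (Y : Fin n → Ω → ℝ) (hY : ∀ i ω, Y i ω = M0 (X i ω).1 (X i ω).2 + E i ω)
    (hident : ∀ i j : Fin n,
      IdentDistrib (fun ω => (X i ω, Y i ω)) (fun ω => (X j ω, Y j ω)) P P)
    (hpairsindep : iIndepFun (fun i ω => (X i ω, Y i ω)) P)
    (hnoisesindep : iIndepFun E P)
    (hnoiseXindep : IndepFun (fun ω => fun i => E i ω) (fun ω => fun i => X i ω) P)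
    (hmean : ∀ i, ∫ ω, E i ω ∂P = 0)
    (hmom2 : ∀ i, ∫ ω, (E i ω) ^ 2 ∂P ≤ σ ^ 2)
    (hmomk : ∀ (i : Fin n) (k : ℕ), 3 ≤ k →
      ∫ ω, |E i ω| ^ k ∂P ≤ σ ^ 2 * (Nat.factorial k) * ξ ^ (k - 2))
    (hmomint : ∀ (i : Fin n) (k : ℕ), Integrable (fun ω => |E i ω| ^ k) P)
    (M : Fin m → Fin p → ℝ) (hM : ∀ i j, |M i j| ≤ 2 * L) :
    ∑ i, ∫ ω, ((Y i ω - M0 (X i ω).1 (X i ω).2) ^ 2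
        - (Y i ω - M (X i ω).1 (X i ω).2) ^ 2) ^ 2 ∂P ≤
      (n : ℝ) * (8 * σ ^ 2 + 2 * (3 * L) ^ 2) *
        (predRisk P X Y ⟨0, hn⟩ M - predRisk P X Y ⟨0, hn⟩ M0) :=
  second_moment_bound_general m p n hn L σ P X hX E hE M0 hM0 Y hY hident hnoiseXindep hmean hmom2
    hmomint M hM
end

section
/- Let M be an m×p matrix with ‖M‖_∞ = max_{i,j}|M_{ij}| ≤ 2L, define T_i = (Y_i − M⁰_{X_i})² − (Y_i − M_{X_i})², and set v = n (8σ² + 2(3L)²)(R(M) − R(M⁰)) and w = 12L(2ξ + 3L). Then for every integer k ≥ 3, Σ_{i=1}^n E[T_i^k] ≤ v k! w^{k−2}/2. -/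
open MeasureTheory ProbabilityTheory
open scoped ENNReal BigOperators

/-! With `D = M - M⁰` read at the sampled entry, `Tᵢ = εᵢ² - (εᵢ - D)² = D (2εᵢ - D)`, so
`|Tᵢ|ᵏ ≤ (3L)ᵏ⁻² D² (2|εᵢ| + 3L)ᵏ`. Since the noise is independent of the design, the expectation
of the right side factors into `E[D²]`, which equals `R(M) - R(M⁰)` because the cross term
`E[εᵢ D]` vanishes, times `E[(2|εᵢ| + 3L)ᵏ]`, which the Bernstein moment condition on the noise
bounds by `(4σ² + 9L²) k! (4 (2ξ + 3L))ᵏ⁻²`. -/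

open scoped Nat

theorem two_mul_add_pow_le {x B : ℝ} (hx : 0 ≤ x) (hB : 0 ≤ B) (k : ℕ) :
    (2 * x + B) ^ k ≤ 2 ^ (k - 1) * (2 ^ k * x ^ k + B ^ k) := by
  simpa only [mul_pow] using add_pow_le (by positivity : 0 ≤ 2 * x) hB k

theorem two_pow_pred_mul_add_pow_le_bernstein {σ ξ B : ℝ} (hξ : 0 ≤ ξ) (hB : 0 ≤ B) {k : ℕ}
    (hk : 3 ≤ k) :
    2 ^ (k - 1) * (2 ^ k * (σ ^ 2 * k ! * ξ ^ (k - 2)) + B ^ k) ≤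
      (4 * σ ^ 2 + B ^ 2) * k ! * (4 * (2 * ξ + B)) ^ (k - 2) := by
  obtain ⟨j, rfl⟩ : ∃ j, k = j + 3 := ⟨k - 3, by omega⟩
  rw [show j + 3 - 1 = j + 2 by omega, show j + 3 - 2 = j + 1 by omega]
  set q : ℝ := 2 ^ (j + 1) with hq_def
  set z : ℝ := (2 * ξ + B) ^ (j + 1) with hz_def
  have hq : 2 ≤ q := le_self_pow₀ one_le_two (by omega)
  have hq2 : q ^ 2 = 4 ^ (j + 1) := by rw [hq_def, ← pow_mul, mul_comm, pow_mul]; norm_num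
  have hfac : (1 : ℝ) ≤ (j + 3)! := by exact_mod_cast (j + 3).factorial_pos
  have hξz : 2 * ξ ^ (j + 1) ≤ z :=
    calc 2 * ξ ^ (j + 1) ≤ q * ξ ^ (j + 1) := mul_le_mul_of_nonneg_right hq (by positivity)
      _ ≤ z := by rw [hq_def, hz_def, ← mul_pow]; gcongr; linarith
  have hBz : 2 * q * B ^ (j + 1) ≤ (j + 3)! * q ^ 2 * z :=
    calc 2 * q * B ^ (j + 1) ≤ q * q * z := by
          gcongr; rw [hz_def]; exact pow_le_pow_left₀ hB (by linarith) _
      _ ≤ (j + 3)! * q ^ 2 * z := by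
          rw [← sq, mul_assoc]; exact le_mul_of_one_le_left (by positivity) hfac
  calc 2 ^ (j + 2) * (2 ^ (j + 3) * (σ ^ 2 * (j + 3)! * ξ ^ (j + 1)) + B ^ (j + 3))
      = 4 * σ ^ 2 * (j + 3)! * q ^ 2 * (2 * ξ ^ (j + 1)) + B ^ 2 * (2 * q * B ^ (j + 1)) := by
        rw [hq_def]; ring
    _ ≤ 4 * σ ^ 2 * (j + 3)! * q ^ 2 * z + B ^ 2 * ((j + 3)! * q ^ 2 * z) := by
        gcongr
    _ = (4 * σ ^ 2 + B ^ 2) * (j + 3)! * (4 * (2 * ξ + B)) ^ (j + 1) := by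
        rw [hq2, hz_def, mul_pow]; ring

theorem abs_sq_sub_sub_sq_pow_le {e D B : ℝ} (hD : |D| ≤ B) {k : ℕ} (hk : 2 ≤ k) :
    |e ^ 2 - (e - D) ^ 2| ^ k ≤ B ^ (k - 2) * ((2 * |e| + B) ^ k * D ^ 2) := by
  have hB : 0 ≤ B := (abs_nonneg D).trans hD
  have hfactor : |e ^ 2 - (e - D) ^ 2| ≤ |D| * (2 * |e| + B) := by
    rw [show e ^ 2 - (e - D) ^ 2 = D * (2 * e - D) by ring, abs_mul]
    gcongr
    calc |2 * e - D| ≤ |2 * e| + |D| := abs_sub _ _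
      _ ≤ 2 * |e| + B := by rw [abs_mul, abs_two]; gcongr
  obtain ⟨j, rfl⟩ : ∃ j, k = j + 2 := ⟨k - 2, by omega⟩
  calc |e ^ 2 - (e - D) ^ 2| ^ (j + 2) ≤ (|D| * (2 * |e| + B)) ^ (j + 2) := by gcongr
    _ = |D| ^ j * ((2 * |e| + B) ^ (j + 2) * |D| ^ 2) := by rw [mul_pow]; ring
    _ ≤ B ^ j * ((2 * |e| + B) ^ (j + 2) * D ^ 2) := by rw [sq_abs]; gcongr
    _ = B ^ (j + 2 - 2) * ((2 * |e| + B) ^ (j + 2) * D ^ 2) := by rw [Nat.add_sub_cancel]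

section NoiseModel

variable {Ω α : Type*} [MeasurableSpace Ω] [MeasurableSpace α] {P : Measure Ω}
  {ε : Ω → ℝ} {X : Ω → α} {D : α → ℝ} {B : ℝ} {k : ℕ}

theorem integrable_two_mul_abs_add_pow [IsFiniteMeasure P] (hε : Measurable ε) (hB : 0 ≤ B)
    (hint : Integrable (fun ω => |ε ω| ^ k) P) :
    Integrable (fun ω => (2 * |ε ω| + B) ^ k) P := by
  have hmaj : Integrable (fun ω => 2 ^ (k - 1) * (2 ^ k * |ε ω| ^ k + B ^ k)) P :=
    ((hint.const_mul _).add (integrable_const _)).const_mul _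
  refine hmaj.mono' (((hε.abs.const_mul 2).add_const B).pow_const k).aestronglyMeasurable
    (ae_of_all _ fun ω => ?_)
  rw [Real.norm_eq_abs, abs_of_nonneg (by positivity)]
  exact two_mul_add_pow_le (abs_nonneg _) hB k

theorem integral_two_mul_abs_add_pow_le [IsProbabilityMeasure P] {σ ξ : ℝ} (hε : Measurable ε)
    (hξ : 0 ≤ ξ) (hB : 0 ≤ B) (hk : 3 ≤ k) (hint : Integrable (fun ω => |ε ω| ^ k) P)
    (hmom : ∫ ω, |ε ω| ^ k ∂P ≤ σ ^ 2 * k ! * ξ ^ (k - 2)) :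
    ∫ ω, (2 * |ε ω| + B) ^ k ∂P ≤
      (4 * σ ^ 2 + B ^ 2) * k ! * (4 * (2 * ξ + B)) ^ (k - 2) := by
  have hint' : Integrable (fun ω => 2 ^ k * |ε ω| ^ k) P := hint.const_mul _
  calc ∫ ω, (2 * |ε ω| + B) ^ k ∂P
      ≤ ∫ ω, 2 ^ (k - 1) * (2 ^ k * |ε ω| ^ k + B ^ k) ∂P :=
        integral_mono (integrable_two_mul_abs_add_pow hε hB hint)
          ((hint'.add (integrable_const _)).const_mul _)
          fun ω => two_mul_add_pow_le (abs_nonneg _) hB k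
    _ = 2 ^ (k - 1) * (2 ^ k * ∫ ω, |ε ω| ^ k ∂P + B ^ k) := by
        rw [integral_const_mul, integral_add hint' (integrable_const _), integral_const_mul,
          integral_const, probReal_univ, one_smul]
    _ ≤ 2 ^ (k - 1) * (2 ^ k * (σ ^ 2 * k ! * ξ ^ (k - 2)) + B ^ k) := by gcongr
    _ ≤ (4 * σ ^ 2 + B ^ 2) * k ! * (4 * (2 * ξ + B)) ^ (k - 2) :=
        two_pow_pred_mul_add_pow_le_bernstein hξ hB hk

theorem integral_sub_comp_sq_eq [IsFiniteMeasure P] (hX : Measurable X) (hε : Measurable ε)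
    (hind : IndepFun ε X P) (hmean : ∫ ω, ε ω ∂P = 0) (hε1 : Integrable ε P)
    (hε2 : Integrable (fun ω => ε ω ^ 2) P) (hD : Measurable D) (hDB : ∀ x, |D x| ≤ B) :
    ∫ ω, (ε ω - D (X ω)) ^ 2 ∂P = ∫ ω, ε ω ^ 2 ∂P + ∫ ω, D (X ω) ^ 2 ∂P := by
  have hDX : Measurable fun ω => D (X ω) := hD.comp hX
  have hcross : Integrable (fun ω => 2 * (ε ω * D (X ω))) P :=
    (hε1.mul_bdd hDX.aestronglyMeasurable (ae_of_all _ fun ω => hDB (X ω))).const_mul 2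
  have hsq : Integrable (fun ω => D (X ω) ^ 2) P :=
    .of_bound (hDX.pow_const 2).aestronglyMeasurable (B ^ 2) (ae_of_all _ fun ω => by
      rw [norm_pow, Real.norm_eq_abs]; exact pow_le_pow_left₀ (abs_nonneg _) (hDB _) 2)
  have hind' : IndepFun ε (fun ω => D (X ω)) P := hind.comp measurable_id hD
  have hcross_zero : ∫ ω, ε ω * D (X ω) ∂P = 0 := by
    rw [hind'.integral_fun_mul_eq_mul_integral hε.aestronglyMeasurable
      hDX.aestronglyMeasurable, hmean, zero_mul]
  calc ∫ ω, (ε ω - D (X ω)) ^ 2 ∂P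
      = ∫ ω, (ε ω ^ 2 - 2 * (ε ω * D (X ω))) + D (X ω) ^ 2 ∂P := by congr with ω; ring
    _ = ∫ ω, ε ω ^ 2 ∂P + ∫ ω, D (X ω) ^ 2 ∂P := by
        have hdiff : Integrable (fun ω => ε ω ^ 2 - 2 * (ε ω * D (X ω))) P := hε2.sub hcross
        rw [integral_add hdiff hsq, integral_sub hε2 hcross, integral_const_mul,
          hcross_zero, mul_zero, sub_zero]

theorem integral_sq_sub_sub_sq_pow_le [IsFiniteMeasure P] (hX : Measurable X)
    (hε : Measurable ε) (hind : IndepFun ε X P) (hD : Measurable D) (hDB : ∀ x, |D x| ≤ B)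
    (hk : 2 ≤ k) (hint : Integrable (fun ω => (2 * |ε ω| + B) ^ k) P) :
    ∫ ω, (ε ω ^ 2 - (ε ω - D (X ω)) ^ 2) ^ k ∂P ≤
      B ^ (k - 2) * ((∫ ω, (2 * |ε ω| + B) ^ k ∂P) * ∫ ω, D (X ω) ^ 2 ∂P) := by
  have hDX : Measurable fun ω => D (X ω) := hD.comp hX
  have hG : Measurable fun t : ℝ => (2 * |t| + B) ^ k :=
    ((measurable_abs.const_mul 2).add_const B).pow_const k
  have hmaj : Integrable (fun ω => B ^ (k - 2) * ((2 * |ε ω| + B) ^ k * D (X ω) ^ 2)) P :=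
    (hint.mul_bdd (hDX.pow_const 2).aestronglyMeasurable (ae_of_all _ fun ω => by
      rw [norm_pow, Real.norm_eq_abs]
      exact pow_le_pow_left₀ (abs_nonneg _) (hDB _) 2)).const_mul _
  have hpt : ∀ ω, |(ε ω ^ 2 - (ε ω - D (X ω)) ^ 2) ^ k| ≤
      B ^ (k - 2) * ((2 * |ε ω| + B) ^ k * D (X ω) ^ 2) := fun ω => by
    rw [abs_pow]; exact abs_sq_sub_sub_sq_pow_le (hDB _) hk
  have hTmeas : Measurable fun ω => (ε ω ^ 2 - (ε ω - D (X ω)) ^ 2) ^ k := by fun_prop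
  have hind' : IndepFun (fun ω => (2 * |ε ω| + B) ^ k) (fun ω => D (X ω) ^ 2) P :=
    hind.comp hG (hD.pow_const 2)
  calc ∫ ω, (ε ω ^ 2 - (ε ω - D (X ω)) ^ 2) ^ k ∂P
      ≤ ∫ ω, B ^ (k - 2) * ((2 * |ε ω| + B) ^ k * D (X ω) ^ 2) ∂P :=
        integral_mono (hmaj.mono' hTmeas.aestronglyMeasurable (ae_of_all _ hpt)) hmaj
          fun ω => (le_abs_self _).trans (hpt ω)
    _ = B ^ (k - 2) * ((∫ ω, (2 * |ε ω| + B) ^ k ∂P) * ∫ ω, D (X ω) ^ 2 ∂P) := by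
        rw [integral_const_mul, hind'.integral_fun_mul_eq_mul_integral
          (hG.comp hε).aestronglyMeasurable (hDX.pow_const 2).aestronglyMeasurable]

end NoiseModel

theorem predRisk_eq_of_identDistrib {Ω : Type*} [MeasurableSpace Ω] {m p n : ℕ}
    {P : Measure Ω} {X : Fin n → Ω → Fin m × Fin p} {Y : Fin n → Ω → ℝ} {i j : Fin n}
    (h : IdentDistrib (fun ω => (X i ω, Y i ω)) (fun ω => (X j ω, Y j ω)) P P)
    (A : Fin m → Fin p → ℝ) : predRisk P X Y i A = predRisk P X Y j A :=
  (h.comp ((measurable_snd.sub ((measurable_of_countable fun x : Fin m × Fin p =>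
    A x.1 x.2).comp measurable_fst)).pow_const 2)).integral_eq

theorem higher_moment_bound_general
    (m p n : ℕ) (hn : 0 < n)
    (L σ ξ : ℝ) (hL : 0 < L) (hξ : 0 < ξ)
    {Ω : Type*} [MeasurableSpace Ω] (P : Measure Ω) [IsProbabilityMeasure P]
    (X : Fin n → Ω → Fin m × Fin p) (hX : ∀ i, Measurable (X i))
    (E : Fin n → Ω → ℝ) (hE : ∀ i, Measurable (E i))
    (M0 : Fin m → Fin p → ℝ) (hM0 : ∀ i j, |M0 i j| ≤ L)
    (Y : Fin n → Ω → ℝ) (hY : ∀ i ω, Y i ω = M0 (X i ω).1 (X i ω).2 + E i ω)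
    (hident : ∀ i j : Fin n,
      IdentDistrib (fun ω => (X i ω, Y i ω)) (fun ω => (X j ω, Y j ω)) P P)
    (hnoiseXindep : IndepFun (fun ω => fun i => E i ω) (fun ω => fun i => X i ω) P)
    (hmean : ∀ i, ∫ ω, E i ω ∂P = 0)
    (hmomk : ∀ (i : Fin n) (k : ℕ), 3 ≤ k →
      ∫ ω, |E i ω| ^ k ∂P ≤ σ ^ 2 * (Nat.factorial k) * ξ ^ (k - 2))
    (hmomint : ∀ (i : Fin n) (k : ℕ), Integrable (fun ω => |E i ω| ^ k) P)
    (M : Fin m → Fin p → ℝ) (hM : ∀ i j, |M i j| ≤ 2 * L)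
    (v w : ℝ)
    (hv : v = (n : ℝ) * (8 * σ ^ 2 + 2 * (3 * L) ^ 2) *
      (predRisk P X Y ⟨0, hn⟩ M - predRisk P X Y ⟨0, hn⟩ M0))
    (hw : w = 12 * L * (2 * ξ + 3 * L)) :
    ∀ k : ℕ, 3 ≤ k →
      ∑ i, ∫ ω, ((Y i ω - M0 (X i ω).1 (X i ω).2) ^ 2
          - (Y i ω - M (X i ω).1 (X i ω).2) ^ 2) ^ k ∂P ≤
        v * (Nat.factorial k) * w ^ (k - 2) / 2 := by
  intro k hk
  set D : Fin m × Fin p → ℝ := fun x => M x.1 x.2 - M0 x.1 x.2 with hD_def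
  have hDB : ∀ x, |D x| ≤ 3 * L := fun x =>
    (abs_sub _ _).trans (by linarith [hM x.1 x.2, hM0 x.1 x.2])
  have hind : ∀ i, IndepFun (E i) (X i) P := fun i =>
    hnoiseXindep.comp (measurable_pi_apply i) (measurable_pi_apply i)
  have hres₀ : ∀ i ω, Y i ω - M0 (X i ω).1 (X i ω).2 = E i ω := fun i ω => by
    rw [hY]; ring
  have hres : ∀ i ω, Y i ω - M (X i ω).1 (X i ω).2 = E i ω - D (X i ω) := fun i ω => by
    rw [hY, hD_def]; ring
  have hrisk : ∀ i, ∫ ω, D (X i ω) ^ 2 ∂P =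
      predRisk P X Y ⟨0, hn⟩ M - predRisk P X Y ⟨0, hn⟩ M0 := by
    intro i
    rw [← predRisk_eq_of_identDistrib (hident i _) M,
      ← predRisk_eq_of_identDistrib (hident i _) M0]
    simp only [predRisk, hres, hres₀]
    rw [integral_sub_comp_sq_eq (hX i) (hE i) (hind i) (hmean i)
      ((integrable_norm_iff (hE i).aestronglyMeasurable).1 (by simpa using hmomint i 1))
      (by simpa using hmomint i 2) (measurable_of_countable D) hDB]
    ring
  set Δ := predRisk P X Y ⟨0, hn⟩ M - predRisk P X Y ⟨0, hn⟩ M0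
  have h3L : 0 ≤ 3 * L := by positivity
  simp only [hres₀, hres]
  calc _ ≤ ∑ _i : Fin n, (3 * L) ^ (k - 2) *
        ((4 * σ ^ 2 + (3 * L) ^ 2) * k ! * (4 * (2 * ξ + 3 * L)) ^ (k - 2) * Δ) := by
        gcongr with i
        grw [integral_sq_sub_sub_sq_pow_le (hX i) (hE i) (hind i) (measurable_of_countable D) hDB
          (by omega) (integrable_two_mul_abs_add_pow (hE i) h3L (hmomint i k)),
          integral_two_mul_abs_add_pow_le (hE i) hξ.le h3L hk (hmomint i k) (hmomk i k hk),
          hrisk i]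
    _ = v * k ! * w ^ (k - 2) / 2 := by
        rw [Finset.sum_const, Finset.card_univ, Fintype.card_fin, nsmul_eq_mul, hv, hw,
          show 12 * L * (2 * ξ + 3 * L) = 3 * L * (4 * (2 * ξ + 3 * L)) by ring, mul_pow (3 * L)]
        ring

/-- Higher moment bound for `Tᵢ = (Yᵢ - M⁰_{Xᵢ})² - (Yᵢ - M_{Xᵢ})²`: with
`v = n (8σ² + 2(3L)²)(R(M) - R(M⁰))` and `w = 12L(2ξ + 3L)`, for every `k ≥ 3`,
`∑ E[Tᵢᵏ] ≤ v k! w^(k-2) / 2`. -/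
theorem higher_moment_bound
    (m p n : ℕ) (hm : 0 < m) (hp : 0 < p) (hn : 0 < n)
    (L σ ξ : ℝ) (hL : 0 < L) (hσ : 0 < σ) (hξ : 0 < ξ)
    {Ω : Type*} [MeasurableSpace Ω] (P : Measure Ω) [IsProbabilityMeasure P]
    (X : Fin n → Ω → Fin m × Fin p) (hX : ∀ i, Measurable (X i))
    (E : Fin n → Ω → ℝ) (hE : ∀ i, Measurable (E i))
    (M0 : Fin m → Fin p → ℝ) (hM0 : ∀ i j, |M0 i j| ≤ L)
    (Y : Fin n → Ω → ℝ) (hY : ∀ i ω, Y i ω = M0 (X i ω).1 (X i ω).2 + E i ω)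
    (hident : ∀ i j : Fin n,
      IdentDistrib (fun ω => (X i ω, Y i ω)) (fun ω => (X j ω, Y j ω)) P P)
    (hpairsindep : iIndepFun (fun i ω => (X i ω, Y i ω)) P)
    (hnoisesindep : iIndepFun E P)
    (hnoiseXindep : IndepFun (fun ω => fun i => E i ω) (fun ω => fun i => X i ω) P)
    (hmean : ∀ i, ∫ ω, E i ω ∂P = 0)
    (hmom2 : ∀ i, ∫ ω, (E i ω) ^ 2 ∂P ≤ σ ^ 2)
    (hmomk : ∀ (i : Fin n) (k : ℕ), 3 ≤ k →
      ∫ ω, |E i ω| ^ k ∂P ≤ σ ^ 2 * (Nat.factorial k) * ξ ^ (k - 2))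
    (hmomint : ∀ (i : Fin n) (k : ℕ), Integrable (fun ω => |E i ω| ^ k) P)
    (M : Fin m → Fin p → ℝ) (hM : ∀ i j, |M i j| ≤ 2 * L)
    (v w : ℝ)
    (hv : v = (n : ℝ) * (8 * σ ^ 2 + 2 * (3 * L) ^ 2) *
      (predRisk P X Y ⟨0, hn⟩ M - predRisk P X Y ⟨0, hn⟩ M0))
    (hw : w = 12 * L * (2 * ξ + 3 * L)) :
    ∀ k : ℕ, 3 ≤ k →
      ∑ i, ∫ ω, ((Y i ω - M0 (X i ω).1 (X i ω).2) ^ 2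
          - (Y i ω - M (X i ω).1 (X i ω).2) ^ 2) ^ k ∂P ≤
        v * (Nat.factorial k) * w ^ (k - 2) / 2 :=
  higher_moment_bound_general m p n hn L σ ξ hL hξ P X hX E hE M0 hM0 Y hY hident hnoiseXindep hmean
    hmomk hmomint M hM v w hv hw
end

section
/- Let ρ be a probability measure on pairs (μ,ν) of an m×K matrix μ and a p×K matrix ν under which μ and ν are independent, ∫ μ ρ(dμ,dν) = U, ∫ ν ρ(dμ,dν) = V, and ρ-almost surely max_{i,ℓ}|μ_{iℓ} − U_{iℓ}| ≤ c and max_{j,ℓ}|ν_{jℓ} − V_{jℓ}| ≤ c. Assume |U_{iℓ}| ≤ √(L/K) and |V_{jℓ}| ≤ √(L/K) for all entries. Then ∫ ‖μ ν^T − M⁰‖²_{F,Π} ρ(dμ,dν) ≤ K c² [ (√K c + √L)² + L ] + ‖U V^T − M⁰‖²_{F,Π}. -/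
open MeasureTheory ProbabilityTheory
open scoped ENNReal BigOperators

/-! Fix an entry `(i, j)` and write `μᵢ ⬝ᵥ νⱼ - M⁰ᵢⱼ = S + T + b` with `S = (μᵢ - Uᵢ) ⬝ᵥ νⱼ`,
`T = Uᵢ ⬝ᵥ (νⱼ - Vⱼ)` and `b = Uᵢ ⬝ᵥ Vⱼ - M⁰ᵢⱼ`. Since `μ` is independent of `ν` with mean `U`,
`S` is orthogonal in `L²(ρ)` to every function of `ν`, in particular to `T + b`; and `T` is
centred. Hence `E[(μᵢ ⬝ᵥ νⱼ - M⁰ᵢⱼ)²] = E[S²] + E[T²] + b²`, and the almost sure bounds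
`|S| ≤ K c (c + √(L/K))`, `|T| ≤ K √(L/K) c` give `K c² ((√K c + √L)² + L) + b²`.
Averaging over the entries with weights `Π` gives the theorem. -/

section

variable {Ω : Type*} [MeasurableSpace Ω] {μ : Measure Ω}

theorem integral_add_sq_of_integral_mul_eq_zero {f g : Ω → ℝ} (hf : MemLp f 2 μ)
    (hg : MemLp g 2 μ) (hfg : ∫ ω, f ω * g ω ∂μ = 0) :
    ∫ ω, (f ω + g ω) ^ 2 ∂μ = ∫ ω, f ω ^ 2 ∂μ + ∫ ω, g ω ^ 2 ∂μ := by
  have hfg' : Integrable (fun ω => 2 * (f ω * g ω)) μ := (hf.integrable_mul hg).const_mul 2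
  have hsum : Integrable (fun ω => f ω ^ 2 + 2 * (f ω * g ω)) μ := hf.integrable_sq.add hfg'
  calc ∫ ω, (f ω + g ω) ^ 2 ∂μ = ∫ ω, (f ω ^ 2 + 2 * (f ω * g ω) + g ω ^ 2) ∂μ := by
        congr 1 with ω; ring
    _ = _ := by
        rw [integral_add hsum hg.integrable_sq,
          integral_add hf.integrable_sq hfg', integral_const_mul, hfg, mul_zero, add_zero]

theorem integral_sq_le_sq_of_ae_abs_le [IsProbabilityMeasure μ] {f : Ω → ℝ} {C : ℝ}
    (h : ∀ᵐ ω ∂μ, |f ω| ≤ C) : ∫ ω, f ω ^ 2 ∂μ ≤ C ^ 2 := by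
  calc ∫ ω, f ω ^ 2 ∂μ ≤ ∫ _, C ^ 2 ∂μ :=
        integral_mono_of_nonneg (.of_forall fun ω => sq_nonneg _) (integrable_const _)
          (h.mono fun ω hω => sq_le_sq' (abs_le.1 hω).1 (abs_le.1 hω).2)
    _ = C ^ 2 := by simp

end

theorem abs_dotProduct_le {ι : Type*} [Fintype ι] {x y : ι → ℝ} {A B : ℝ}
    (hx : ∀ i, |x i| ≤ A) (hy : ∀ i, |y i| ≤ B) :
    |x ⬝ᵥ y| ≤ Fintype.card ι * (A * B) := by
  calc |x ⬝ᵥ y| ≤ ∑ i, |x i * y i| := Finset.abs_sum_le_sum_abs _ _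
    _ ≤ ∑ _i : ι, A * B := Finset.sum_le_sum fun i _ => by
        rw [abs_mul]
        exact mul_le_mul (hx i) (hy i) (abs_nonneg _) ((abs_nonneg _).trans (hx i))
    _ = Fintype.card ι * (A * B) := by simp

section RandomVectors

variable {Ω ι : Type*} [MeasurableSpace Ω] [Fintype ι] {P : Measure Ω} [IsProbabilityMeasure P]
  {X Y : Ω → ι → ℝ} {u v : ι → ℝ}

theorem integral_dotProduct_sub_eq_zero (hY : ∀ i, Integrable (fun ω => Y ω i) P)
    (hmean : ∀ i, ∫ ω, Y ω i ∂P = v i) (u : ι → ℝ) :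
    ∫ ω, u ⬝ᵥ (Y ω - v) ∂P = 0 := by
  have hterm : ∀ i, Integrable (fun ω => u i * (Y ω i - v i)) P := fun i =>
    ((hY i).sub (integrable_const (v i))).const_mul (u i)
  simp only [dotProduct, Pi.sub_apply]
  rw [integral_finsetSum _ fun i _ => hterm i]
  refine Finset.sum_eq_zero fun i _ => ?_
  rw [integral_const_mul, integral_sub (hY i) (integrable_const _), hmean, integral_const]
  simp

theorem ProbabilityTheory.IndepFun.integral_sub_dotProduct_mul_eq_zero (hXY : IndepFun X Y P)
    (hX : Measurable X) (hY : Measurable Y) (hXi : ∀ i, Integrable (fun ω => X ω i) P)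
    (hmean : ∀ i, ∫ ω, X ω i ∂P = u i) {g : (ι → ℝ) → ℝ} (hg : Measurable g)
    (hYg : ∀ i, Integrable (fun ω => Y ω i * g (Y ω)) P) :
    ∫ ω, (X ω - u) ⬝ᵥ Y ω * g (Y ω) ∂P = 0 := by
  have hcentered : ∀ i, ∫ ω, (X ω i - u i) ∂P = 0 := fun i => by
    rw [integral_sub (hXi i) (integrable_const _), hmean, integral_const]
    simp
  have hXc : ∀ i, Integrable (fun ω => X ω i - u i) P := fun i =>
    (hXi i).sub (integrable_const _)
  have hterm : ∀ i, Integrable (fun ω => (X ω i - u i) * (Y ω i * g (Y ω))) P := fun i =>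
    (hXY.comp (φ := fun x : ι → ℝ => x i - u i) (ψ := fun y : ι → ℝ => y i * g y) (by fun_prop)
      (by fun_prop)).integrable_mul (hXc i) (hYg i)
  calc ∫ ω, (X ω - u) ⬝ᵥ Y ω * g (Y ω) ∂P
      = ∫ ω, ∑ i, (X ω i - u i) * (Y ω i * g (Y ω)) ∂P := by
        simp only [dotProduct, Pi.sub_apply, Finset.sum_mul, mul_assoc]
    _ = 0 := by
        rw [integral_finsetSum _ fun i _ => hterm i]
        refine Finset.sum_eq_zero fun i _ => ?_
        rw [hXY.integral_fun_comp_mul_comp (f := fun x => x i - u i) (g := fun y => y i * g y)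
          hX.aemeasurable hY.aemeasurable (by fun_prop : Measurable _).aestronglyMeasurable
          (by fun_prop : Measurable _).aestronglyMeasurable, hcentered, zero_mul]

theorem integral_dotProduct_sub_sq_le (hXY : IndepFun X Y P) (hX : Measurable X)
    (hY : Measurable Y) (hmeanX : ∀ i, ∫ ω, X ω i ∂P = u i)
    (hmeanY : ∀ i, ∫ ω, Y ω i ∂P = v i) {c d : ℝ}
    (hXu : ∀ᵐ ω ∂P, ∀ i, |X ω i - u i| ≤ c) (hYv : ∀ᵐ ω ∂P, ∀ i, |Y ω i - v i| ≤ c)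
    (hu : ∀ i, |u i| ≤ d) (hv : ∀ i, |v i| ≤ d) (a : ℝ) :
    Integrable (fun ω => (X ω ⬝ᵥ Y ω - a) ^ 2) P ∧
      ∫ ω, (X ω ⬝ᵥ Y ω - a) ^ 2 ∂P ≤
        (Fintype.card ι * (c * (c + d))) ^ 2 + (Fintype.card ι * (d * c)) ^ 2 +
          (u ⬝ᵥ v - a) ^ 2 := by
  have hXabs : ∀ᵐ ω ∂P, ∀ i, |X ω i| ≤ c + d := hXu.mono fun ω h i => by
    linarith [abs_sub_abs_le_abs_sub (X ω i) (u i), h i, hu i]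
  have hYabs : ∀ᵐ ω ∂P, ∀ i, |Y ω i| ≤ c + d := hYv.mono fun ω h i => by
    linarith [abs_sub_abs_le_abs_sub (Y ω i) (v i), h i, hv i]
  have hXi : ∀ i, MemLp (fun ω => X ω i) ⊤ P := fun i =>
    memLp_top_of_bound (by fun_prop) _ (hXabs.mono fun ω h => h i)
  have hYi : ∀ i, MemLp (fun ω => Y ω i) ⊤ P := fun i =>
    memLp_top_of_bound (by fun_prop) _ (hYabs.mono fun ω h => h i)
  set S := fun ω => (X ω - u) ⬝ᵥ Y ω
  set T := fun ω => u ⬝ᵥ (Y ω - v)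
  set b := u ⬝ᵥ v - a
  have hSbound : ∀ᵐ ω ∂P, |S ω| ≤ Fintype.card ι * (c * (c + d)) := by
    filter_upwards [hXu, hYabs] with ω hXω hYω
    exact abs_dotProduct_le hXω hYω
  have hTbound : ∀ᵐ ω ∂P, |T ω| ≤ Fintype.card ι * (d * c) :=
    hYv.mono fun ω hYω => abs_dotProduct_le hu hYω
  have hS : MemLp S ⊤ P := memLp_top_of_bound (by fun_prop) _ hSbound
  have hT : MemLp T ⊤ P := memLp_top_of_bound (by fun_prop) _ hTbound
  have hTb : MemLp (fun ω => T ω + b) ⊤ P := hT.add (memLp_const b)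
  have hsplit : ∀ ω, X ω ⬝ᵥ Y ω - a = S ω + (T ω + b) := fun ω => by
    simp only [S, T, b, sub_dotProduct, dotProduct_sub]
    ring
  have hS_orth : ∫ ω, S ω * (T ω + b) ∂P = 0 := by
    have hW : ∀ ω, T ω + b = u ⬝ᵥ Y ω - a := fun ω => by
      simp only [T, b, dotProduct_sub]
      ring
    simp only [hW]
    refine hXY.integral_sub_dotProduct_mul_eq_zero (g := fun y => u ⬝ᵥ y - a) hX hY
      (fun i => (hXi i).integrable le_top) hmeanX (by fun_prop) fun i => ?_
    simp only [← hW]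
    exact (hTb.mul' (hYi i)).integrable le_top
  have hT_orth : ∫ ω, T ω * b ∂P = 0 := by
    rw [integral_mul_const, integral_dotProduct_sub_eq_zero
      (fun i => (hYi i).integrable le_top) hmeanY u, zero_mul]
  have hS2 : MemLp S 2 P := hS.mono_exponent le_top
  have hT2 : MemLp T 2 P := hT.mono_exponent le_top
  have hTb2 : MemLp (fun ω => T ω + b) 2 P := hTb.mono_exponent le_top
  simp only [hsplit]
  refine ⟨(hS2.add hTb2).integrable_sq, ?_⟩
  calc ∫ ω, (S ω + (T ω + b)) ^ 2 ∂P
      = ∫ ω, S ω ^ 2 ∂P + (∫ ω, T ω ^ 2 ∂P + b ^ 2) := by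
        rw [integral_add_sq_of_integral_mul_eq_zero hS2 hTb2 hS_orth,
          integral_add_sq_of_integral_mul_eq_zero hT2 (memLp_const b) hT_orth]
        simp
    _ ≤ (Fintype.card ι * (c * (c + d))) ^ 2 + ((Fintype.card ι * (d * c)) ^ 2 + b ^ 2) := by
        gcongr
        · exact integral_sq_le_sq_of_ae_abs_le hSbound
        · exact integral_sq_le_sq_of_ae_abs_le hTbound
    _ = _ := by ring

end RandomVectors

theorem integral_genFrobSq_le {Ω : Type*} [MeasurableSpace Ω] {μ : Measure Ω} {m p : ℕ}
    {Pi : Fin m → Fin p → ℝ} (hPi0 : ∀ i j, 0 ≤ Pi i j) (hPi1 : ∑ i, ∑ j, Pi i j = 1)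
    {E : Ω → Fin m → Fin p → ℝ} {B : Fin m → Fin p → ℝ} {C : ℝ}
    (hint : ∀ i j, Integrable (fun ω => E ω i j ^ 2) μ)
    (hle : ∀ i j, ∫ ω, E ω i j ^ 2 ∂μ ≤ C + B i j ^ 2) :
    ∫ ω, genFrobSq Pi (E ω) ∂μ ≤ C + genFrobSq Pi B := by
  have hterm : ∀ i j, Integrable (fun ω => E ω i j ^ 2 * Pi i j) μ := fun i j =>
    (hint i j).mul_const _
  calc ∫ ω, genFrobSq Pi (E ω) ∂μ = ∑ i, ∑ j, (∫ ω, E ω i j ^ 2 ∂μ) * Pi i j := by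
        simp only [genFrobSq]
        rw [integral_finsetSum _ fun i _ => integrable_finsetSum _ fun j _ => hterm i j]
        refine Finset.sum_congr rfl fun i _ => ?_
        rw [integral_finsetSum _ fun j _ => hterm i j]
        exact Finset.sum_congr rfl fun j _ => integral_mul_const _ _
    _ ≤ ∑ i, ∑ j, (C + B i j ^ 2) * Pi i j := by
        gcongr with i _ j _
        · exact hPi0 i j
        · exact hle i j
    _ = C + genFrobSq Pi B := by
        simp only [genFrobSq, add_mul, Finset.sum_add_distrib, ← Finset.mul_sum, hPi1, mul_one]

theorem sq_mul_add_sqrt_div_add_sq_eq {k : ℝ} (hk : 0 < k) {L : ℝ} (hL : 0 ≤ L) (c : ℝ) :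
    (k * (c * (c + √(L / k)))) ^ 2 + (k * (√(L / k) * c)) ^ 2 =
      k * c ^ 2 * ((√k * c + √L) ^ 2 + L) := by
  obtain ⟨s, hs, rfl⟩ : ∃ s, 0 < s ∧ k = s ^ 2 :=
    ⟨√k, Real.sqrt_pos.2 hk, (Real.sq_sqrt hk.le).symm⟩
  obtain ⟨t, ht, rfl⟩ : ∃ t, 0 ≤ t ∧ L = t ^ 2 := ⟨√L, Real.sqrt_nonneg L, (Real.sq_sqrt hL).symm⟩
  rw [Real.sqrt_sq hs.le, Real.sqrt_sq ht, ← div_pow, Real.sqrt_sq (by positivity)]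
  field_simp

theorem integrated_genFrob_bound_general
    (m p K : ℕ) (hK : 0 < K)
    (c L : ℝ) (hL : 0 < L)
    (M0 : Fin m → Fin p → ℝ)
    (Pi : Fin m → Fin p → ℝ) (hPi0 : ∀ i j, 0 ≤ Pi i j) (hPi1 : ∑ i, ∑ j, Pi i j = 1)
    (U : Fin m → Fin K → ℝ) (V : Fin p → Fin K → ℝ)
    (hU : ∀ i ℓ, |U i ℓ| ≤ Real.sqrt (L / K)) (hV : ∀ j ℓ, |V j ℓ| ≤ Real.sqrt (L / K))
    (ρ : Measure ((Fin m → Fin K → ℝ) × (Fin p → Fin K → ℝ))) [IsProbabilityMeasure ρ]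
    (hindep : IndepFun (fun x => x.1) (fun x => x.2) ρ)
    (hmeanU : ∀ i ℓ, ∫ x, x.1 i ℓ ∂ρ = U i ℓ)
    (hmeanV : ∀ j ℓ, ∫ x, x.2 j ℓ ∂ρ = V j ℓ)
    (hbound : ∀ᵐ x ∂ρ,
      (∀ i ℓ, |x.1 i ℓ - U i ℓ| ≤ c) ∧ (∀ j ℓ, |x.2 j ℓ - V j ℓ| ≤ c)) :
    ∫ x, genFrobSq Pi (fun i j => matMul x.1 x.2 i j - M0 i j) ∂ρ ≤
      (K : ℝ) * c ^ 2 * ((Real.sqrt K * c + Real.sqrt L) ^ 2 + L) +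
        genFrobSq Pi (fun i j => matMul U V i j - M0 i j) := by
  have hentry := fun i j => integral_dotProduct_sub_sq_le
    (hindep.comp (measurable_pi_apply i) (measurable_pi_apply j)) (by fun_prop) (by fun_prop)
    (hmeanU i) (hmeanV j) (hbound.mono fun x hx => hx.1 i) (hbound.mono fun x hx => hx.2 j)
    (hU i) (hV j) (M0 i j)
  simp only [Fintype.card_fin, sq_mul_add_sqrt_div_add_sq_eq (Nat.cast_pos.2 hK) hL.le] at hentry
  exact integral_genFrobSq_le hPi0 hPi1 (fun i j => (hentry i j).1) fun i j => (hentry i j).2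

/-- Bias–variance style expansion bound: if under `ρ` the factors `μ` and `ν` are independent
with means `U`, `V`, entries within `c` of the means almost surely, and `|U_{iℓ}|, |V_{jℓ}| ≤
√(L/K)`, then `∫ ‖μνᵀ - M⁰‖²_{F,Π} dρ ≤ K c² ((√K c + √L)² + L) + ‖UVᵀ - M⁰‖²_{F,Π}`. -/
theorem integrated_genFrob_bound
    (m p K : ℕ) (hm : 0 < m) (hp : 0 < p) (hK : 0 < K)
    (c L : ℝ) (hc : 0 ≤ c) (hL : 0 < L)
    (M0 : Fin m → Fin p → ℝ)
    (Pi : Fin m → Fin p → ℝ) (hPi0 : ∀ i j, 0 ≤ Pi i j) (hPi1 : ∑ i, ∑ j, Pi i j = 1)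
    (U : Fin m → Fin K → ℝ) (V : Fin p → Fin K → ℝ)
    (hU : ∀ i ℓ, |U i ℓ| ≤ Real.sqrt (L / K)) (hV : ∀ j ℓ, |V j ℓ| ≤ Real.sqrt (L / K))
    (ρ : Measure ((Fin m → Fin K → ℝ) × (Fin p → Fin K → ℝ))) [IsProbabilityMeasure ρ]
    (hindep : IndepFun (fun x => x.1) (fun x => x.2) ρ)
    (hmeanU : ∀ i ℓ, ∫ x, x.1 i ℓ ∂ρ = U i ℓ)
    (hmeanV : ∀ j ℓ, ∫ x, x.2 j ℓ ∂ρ = V j ℓ)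
    (hbound : ∀ᵐ x ∂ρ,
      (∀ i ℓ, |x.1 i ℓ - U i ℓ| ≤ c) ∧ (∀ j ℓ, |x.2 j ℓ - V j ℓ| ≤ c)) :
    ∫ x, genFrobSq Pi (fun i j => matMul x.1 x.2 i j - M0 i j) ∂ρ ≤
      (K : ℝ) * c ^ 2 * ((Real.sqrt K * c + Real.sqrt L) ^ 2 + L) +
        genFrobSq Pi (fun i j => matMul U V i j - M0 i j) :=
  integrated_genFrob_bound_general m p K hK c L hL M0 Pi hPi0 hPi1 U V hU hV ρ hindep hmeanU hmeanV
    hbound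
end

section
/- Let M = U V^T with U an m×K matrix, V a p×K matrix, |U_{iℓ}| ≤ √(L/K) and |V_{jℓ}| ≤ √(L/K) for all entries, and suppose the last K − k₀ columns of U and of V are zero, where k₀ ∈ {1,…,K}. Let κ ≤ c < (√2 − 1)√(L/K) and let ρ_{U,V,c} be the probability measure on pairs (μ,ν) proportional to 1{max_{i,ℓ}|μ_{iℓ} − U_{iℓ}| ≤ c, max_{j,ℓ}|ν_{jℓ} − V_{jℓ}| ≤ c} π(dμ,dν), where π is viewed as a distribution on factor pairs (μ,ν). Then K(ρ_{U,V,c}, π) ≤ 2(k₀ − 1) log(1/τ) + 2 log(1/(1−τ)) + (m+p) k₀ log( (1/c) √(2L/K) ). -/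
open MeasureTheory ProbabilityTheory
open scoped ENNReal BigOperators

/-!
`ρ` is `π` conditioned on `S`, whose density with respect to `π` is `1 / π(S)` on `S`, so
`K(ρ, π) = -log π(S)`; this also holds when `π(S) = 0`, where `ρ = 0` and both sides are `0`
by the junk conventions. The set `S` is the sup-norm ball of radius `c` around `(U, V)`.
In the mixture component of rank `k₀`, each entry of the first `k₀` columns is uniform on
`[-δ, δ]` with `δ = √(2L/K) = √2 √(L/K)`, and `|U_{iℓ}| + c ≤ δ` puts the side
`[U_{iℓ} - c, U_{iℓ} + c]` of the ball inside it, at probability `c / δ`; the other entries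
are uniform on `[-κ, κ] ⊆ [-c, c]` while `U_{iℓ} = 0` there, at probability `1`. Hence
`π(S) ≥ τ^(k₀-1) (1-τ)/(1-τ^K) · (c/δ)^((m+p) k₀)`, and taking logarithms gives the bound
with the factors `2` to spare. For `c = 0` the ball is a point, which `π` does not charge.
-/

open Metric

lemma KLdiv_cond_eq_neg_log {α : Type*} [MeasurableSpace α] (π : Measure α) [SigmaFinite π]
    {S : Set α} (hS : MeasurableSet S) : KLdiv π[|S] π = -Real.log (π S).toReal := by
  by_cases hdeg : π S = 0 ∨ π S = ∞
  · have hzero : π[|S] = 0 := cond_eq_zero.2 hdeg.symm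
    rcases hdeg with h | h <;> simp [KLdiv, hzero, h]
  rw [not_or] at hdeg
  have hrn : π[|S].rnDeriv π =ᵐ[π] (π S)⁻¹ • S.indicator 1 :=
    (Measure.rnDeriv_smul_left_of_ne_top' _ _ (ENNReal.inv_ne_top.2 hdeg.1)).trans
      ((Measure.rnDeriv_restrict_self π hS).mono fun x hx => by simp [hx])
  have hrn_cond : ∀ᵐ x ∂π[|S], (π[|S].rnDeriv π x).toReal = ((π S)⁻¹).toReal := by
    filter_upwards [cond_absolutelyContinuous.ae_le hrn, ae_cond_mem hS] with x hx hxS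
    simp [hx, hxS]
  have := cond_isProbabilityMeasure_of_finite hdeg.1 hdeg.2
  rw [KLdiv, integral_congr_ae (hrn_cond.mono fun x hx => by rw [hx]), integral_const]
  simp [Real.log_inv]

lemma closedBall_prod_pi_eq {ι ι' ν ν' : Type*} [Fintype ι] [Fintype ι'] [Fintype ν]
    [Fintype ν'] (U : ι → ν → ℝ) (V : ι' → ν' → ℝ) {c : ℝ} (hc : 0 ≤ c) :
    closedBall (U, V) c =
      {x | (∀ i ℓ, |x.1 i ℓ - U i ℓ| ≤ c) ∧ (∀ j ℓ, |x.2 j ℓ - V j ℓ| ≤ c)} := by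
  ext x
  simp only [Set.mem_ofPred_eq, mem_closedBall, Prod.dist_eq, max_le_iff, dist_pi_le_iff hc,
    Real.dist_eq]

instance Measure.isFiniteMeasure_ite {α : Type*} [MeasurableSpace α] (b : Prop) [Decidable b]
    (μ ν : Measure α) [IsFiniteMeasure μ] [IsFiniteMeasure ν] :
    IsFiniteMeasure (if b then μ else ν) := by
  split_ifs <;> assumption

instance unifIcc.instIsFiniteMeasure (a : ℝ) : IsFiniteMeasure (unifIcc a) := by
  rcases lt_trichotomy a 0 with ha | rfl | ha
  · rw [unifIcc, if_neg ha.ne, Set.Icc_eq_empty_of_lt (by linarith), Measure.restrict_empty,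
      smul_zero]
    infer_instance
  · simp only [unifIcc, if_true]
    infer_instance
  · rw [unifIcc, if_neg ha.ne']
    exact Measure.smul_finite _ (ENNReal.inv_ne_top.2 (by simpa using ha))

lemma unifIcc_nullSingletonClass {a : ℝ} (ha : a ≠ 0) : NullSingletonClass (unifIcc a) :=
  ⟨fun x => by simp [unifIcc, ha]⟩

lemma unifIcc_closedBall_of_abs_add_le {a x r : ℝ} (ha : 0 < a) (hxr : |x| + r ≤ a) :
    unifIcc a (closedBall x r) = ENNReal.ofReal (r / a) := by
  have hsub : closedBall x r ⊆ Set.Icc (-a) a := by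
    rw [← Real.closedBall_zero_eq_Icc]
    exact closedBall_subset_closedBall' (by rw [dist_zero_right, Real.norm_eq_abs]; linarith)
  rw [unifIcc, if_neg ha.ne', Measure.smul_apply, Measure.restrict_apply' measurableSet_Icc,
    Set.inter_eq_left.2 hsub, Real.volume_closedBall, smul_eq_mul,
    ← ENNReal.ofReal_inv_of_pos (by positivity), ← ENNReal.ofReal_mul (by positivity)]
  congr 1
  field_simp

lemma unifIcc_closedBall_zero_eq_one {a r : ℝ} (ha : 0 ≤ a) (har : a ≤ r) :
    unifIcc a (closedBall 0 r) = 1 := by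
  rcases ha.eq_or_lt with rfl | ha
  · simp [unifIcc, ha.trans har]
  · rw [unifIcc, if_neg ha.ne', Measure.smul_apply, Measure.restrict_apply' measurableSet_Icc,
      Real.closedBall_zero_eq_Icc, Set.inter_eq_right.2 (Set.Icc_subset_Icc (neg_le_neg har) har),
      Real.volume_Icc, smul_eq_mul, sub_neg_eq_add, ← two_mul]
    exact ENNReal.inv_mul_cancel (by simpa using ha) ENNReal.ofReal_ne_top

instance factorPrior.instIsFiniteMeasure (m K : ℕ) (δ κ : ℝ) (k : ℕ) :
    IsFiniteMeasure (factorPrior m K δ κ k) := by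
  unfold factorPrior
  infer_instance

lemma factorPrior_nullSingletonClass {m K k : ℕ} {δ : ℝ} (κ : ℝ) (hδ : δ ≠ 0) (i : Fin m)
    (ℓ : Fin K) (hℓ : (ℓ : ℕ) < k) : NullSingletonClass (factorPrior m K δ κ k) := by
  have := unifIcc_nullSingletonClass hδ
  have : NullSingletonClass (if (ℓ : ℕ) < k then unifIcc δ else unifIcc κ) := by
    rwa [if_pos hℓ]
  have := Measure.pi_nullSingletonClass
    (μ := fun ℓ : Fin K => if (ℓ : ℕ) < k then unifIcc δ else unifIcc κ) ℓ
  exact Measure.pi_nullSingletonClass i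

lemma factorPrior_closedBall {m K k : ℕ} {δ κ c : ℝ} (hδ : 0 < δ) (hκ : 0 ≤ κ) (hκc : κ ≤ c)
    (hk : k ≤ K) {U : Fin m → Fin K → ℝ}
    (hU : ∀ i (ℓ : Fin K), (ℓ : ℕ) < k → |U i ℓ| + c ≤ δ)
    (hU0 : ∀ i (ℓ : Fin K), k ≤ (ℓ : ℕ) → U i ℓ = 0) :
    factorPrior m K δ κ k (closedBall U c) = ENNReal.ofReal (c / δ) ^ (m * k) := by
  have hc : 0 ≤ c := hκ.trans hκc
  have hrow : ∀ i, (Measure.pi fun ℓ : Fin K => if (ℓ : ℕ) < k then unifIcc δ else unifIcc κ)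
      (closedBall (U i) c) = ENNReal.ofReal (c / δ) ^ k := by
    intro i
    rw [closedBall_pi _ hc, Measure.pi_pi]
    calc ∏ ℓ : Fin K, _ = ∏ ℓ : Fin K, if (ℓ : ℕ) < k then ENNReal.ofReal (c / δ) else 1 := by
          refine Finset.prod_congr rfl fun ℓ _ => ?_
          split_ifs with hℓ
          · exact unifIcc_closedBall_of_abs_add_le hδ (hU i ℓ hℓ)
          · rw [hU0 i ℓ (not_lt.1 hℓ)]
            exact unifIcc_closedBall_zero_eq_one hκ hκc
      _ = ENNReal.ofReal (c / δ) ^ k := by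
          rw [Finset.prod_ite, Finset.prod_const, Finset.prod_const_one, mul_one,
            Fin.card_filter_val_lt, min_eq_right hk]
  rw [factorPrior, closedBall_pi _ hc, Measure.pi_pi, Finset.prod_congr rfl fun i _ => hrow i,
    Finset.prod_const, Finset.card_univ, Fintype.card_fin, ← pow_mul, mul_comm]

instance pairPrior.instIsFiniteMeasure (m p K : ℕ) (L τ κ : ℝ) :
    IsFiniteMeasure (pairPrior m p K L τ κ) := by
  have (k : ℕ) : IsFiniteMeasure (ENNReal.ofReal (τ ^ k * (1 - τ) / (1 - τ ^ K)) •
      ((factorPrior m K (Real.sqrt (2 * L / K)) κ (k + 1)).prod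
        (factorPrior p K (Real.sqrt (2 * L / K)) κ (k + 1)))) :=
    Measure.smul_finite _ ENNReal.ofReal_ne_top
  unfold pairPrior
  infer_instance

lemma pairPrior_nullSingletonClass {m p K : ℕ} {L : ℝ} (τ κ : ℝ) (hL : 0 < L) (hm : 0 < m) :
    NullSingletonClass (pairPrior m p K L τ κ) := by
  refine ⟨fun x => ?_⟩
  rw [pairPrior, Measure.finsetSum_apply]
  refine Finset.sum_eq_zero fun k hk => ?_
  have hK : 0 < K := (Nat.zero_le k).trans_lt (Finset.mem_range.1 hk)
  have := factorPrior_nullSingletonClass (m := m) (K := K) (k := k + 1)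
    (δ := Real.sqrt (2 * L / K)) κ
    (Real.sqrt_pos.2 (by positivity)).ne' ⟨0, hm⟩ ⟨0, hK⟩ k.succ_pos
  rw [Measure.smul_apply, measure_singleton, smul_zero]

lemma pairPrior_prod_ge {m p K k : ℕ} (L τ κ : ℝ) (hk : k < K)
    (A : Set (Fin m → Fin K → ℝ)) (B : Set (Fin p → Fin K → ℝ)) :
    ENNReal.ofReal (τ ^ k * (1 - τ) / (1 - τ ^ K)) *
        (factorPrior m K (Real.sqrt (2 * L / K)) κ (k + 1) A *
          factorPrior p K (Real.sqrt (2 * L / K)) κ (k + 1) B) ≤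
      pairPrior m p K L τ κ (A ×ˢ B) := by
  rw [pairPrior, Measure.finsetSum_apply, ← Measure.prod_prod, ← smul_eq_mul,
    ← Measure.smul_apply]
  exact Finset.single_le_sum_of_canonicallyOrdered (M := ℝ≥0∞) (Finset.mem_range.2 hk)

lemma neg_log_rankWeight_le {τ : ℝ} (hτ : τ ∈ Set.Ioo 0 1) (k : ℕ) {K : ℕ} (hK : 0 < K) :
    -Real.log (τ ^ k * (1 - τ) / (1 - τ ^ K)) ≤
      k * Real.log (1 / τ) + Real.log (1 / (1 - τ)) := by
  obtain ⟨hτ0, hτ1⟩ := hτ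
  have hτK : τ ^ K < 1 := pow_lt_one₀ hτ0.le hτ1 hK.ne'
  have hlogK : Real.log (1 - τ ^ K) ≤ 0 :=
    Real.log_nonpos (by linarith) (by linarith [pow_pos hτ0 K])
  rw [Real.log_div (by positivity) (by linarith), Real.log_mul (by positivity) (by linarith),
    Real.log_pow, one_div, one_div, Real.log_inv, Real.log_inv]
  linarith

lemma neg_log_pairPrior_closedBall_le_of_pos {m p K k : ℕ} {L τ κ c : ℝ} (hL : 0 < L)
    (hτ : τ ∈ Set.Ioo 0 1) (hk : k < K) (hκ : 0 ≤ κ) (hκc : κ ≤ c) (hc : 0 < c)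
    {U : Fin m → Fin K → ℝ} {V : Fin p → Fin K → ℝ}
    (hU : ∀ i ℓ, |U i ℓ| + c ≤ Real.sqrt (2 * L / K))
    (hV : ∀ j ℓ, |V j ℓ| + c ≤ Real.sqrt (2 * L / K))
    (hU0 : ∀ i (ℓ : Fin K), k + 1 ≤ (ℓ : ℕ) → U i ℓ = 0)
    (hV0 : ∀ j (ℓ : Fin K), k + 1 ≤ (ℓ : ℕ) → V j ℓ = 0) :
    -Real.log (pairPrior m p K L τ κ (closedBall (U, V) c)).toReal ≤
      k * Real.log (1 / τ) + Real.log (1 / (1 - τ)) +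
        ((m : ℝ) + p) * ((k + 1 : ℕ) : ℝ) * Real.log ((1 / c) * Real.sqrt (2 * L / K)) := by
  have hK : 0 < K := (Nat.zero_le k).trans_lt hk
  set δ := Real.sqrt (2 * L / K)
  have hδ : 0 < δ := Real.sqrt_pos.2 (by positivity)
  set w := τ ^ k * (1 - τ) / (1 - τ ^ K)
  have hw : 0 < w := div_pos (mul_pos (pow_pos hτ.1 k) (by linarith [hτ.2]))
    (by linarith [pow_lt_one₀ hτ.1.le hτ.2 hK.ne'])
  set N := (m + p) * (k + 1)
  have hpos : 0 < w * (c / δ) ^ N := by positivity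
  have hlb : ENNReal.ofReal (w * (c / δ) ^ N) ≤ pairPrior m p K L τ κ (closedBall (U, V) c) := by
    rw [← closedBall_prod_same]
    refine le_of_eq_of_le ?_ (pairPrior_prod_ge L τ κ hk _ _)
    rw [factorPrior_closedBall hδ hκ hκc hk (fun i ℓ _ => hU i ℓ) hU0,
      factorPrior_closedBall hδ hκ hκc hk (fun j ℓ _ => hV j ℓ) hV0, ← pow_add, ← add_mul,
      ENNReal.ofReal_mul hw.le, ENNReal.ofReal_pow (by positivity)]
  calc -Real.log (pairPrior m p K L τ κ (closedBall (U, V) c)).toReal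
      ≤ -Real.log (w * (c / δ) ^ N) := neg_le_neg (Real.log_le_log hpos
        ((ENNReal.ofReal_le_iff_le_toReal (measure_ne_top _ _)).1 hlb))
    _ = -Real.log w + N * Real.log ((1 / c) * δ) := by
        rw [Real.log_mul hw.ne' (by positivity), Real.log_pow,
          show (1 / c) * δ = (c / δ)⁻¹ by field_simp, Real.log_inv]
        ring
    _ ≤ _ := by
        have := neg_log_rankWeight_le hτ k hK
        push_cast [N]
        linarith

lemma neg_log_pairPrior_closedBall_le {m p K k : ℕ} {L τ κ c : ℝ} (hL : 0 < L)
    (hτ : τ ∈ Set.Ioo 0 1) (hk : k < K) (hm : 0 < m) (hκ : 0 ≤ κ) (hκc : κ ≤ c)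
    {U : Fin m → Fin K → ℝ} {V : Fin p → Fin K → ℝ}
    (hU : ∀ i ℓ, |U i ℓ| + c ≤ Real.sqrt (2 * L / K))
    (hV : ∀ j ℓ, |V j ℓ| + c ≤ Real.sqrt (2 * L / K))
    (hU0 : ∀ i (ℓ : Fin K), k + 1 ≤ (ℓ : ℕ) → U i ℓ = 0)
    (hV0 : ∀ j (ℓ : Fin K), k + 1 ≤ (ℓ : ℕ) → V j ℓ = 0) :
    -Real.log (pairPrior m p K L τ κ (closedBall (U, V) c)).toReal ≤
      k * Real.log (1 / τ) + Real.log (1 / (1 - τ)) +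
        ((m : ℝ) + p) * ((k + 1 : ℕ) : ℝ) * Real.log ((1 / c) * Real.sqrt (2 * L / K)) := by
  rcases (hκ.trans hκc).eq_or_lt with rfl | hc
  · have := pairPrior_nullSingletonClass (m := m) (p := p) (K := K) τ κ hL hm
    rw [closedBall_zero, measure_singleton, ENNReal.toReal_zero, Real.log_zero, neg_zero,
      div_zero, zero_mul, Real.log_zero, mul_zero, add_zero]
    have := Real.log_nonneg (one_le_one_div hτ.1 hτ.2.le)
    have := Real.log_nonneg (one_le_one_div (sub_pos.2 hτ.2) (by linarith [hτ.1]))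
    positivity
  · exact neg_log_pairPrior_closedBall_le_of_pos hL hτ hk hκ hκc hc hU hV hU0 hV0

theorem kl_truncated_prior_bound_general
    (m p : ℕ)
    (L τ : ℝ) (hτ : τ ∈ Set.Ioo (0 : ℝ) 1)
    (κ : ℝ) (hκ0 : 0 ≤ κ)
    (k0 : ℕ) (hk01 : 1 ≤ k0) (hk0K : k0 ≤ min m p)
    (U : Fin m → Fin (min m p) → ℝ) (V : Fin p → Fin (min m p) → ℝ)
    (hU : ∀ i ℓ, |U i ℓ| ≤ Real.sqrt (L / (min m p : ℝ)))
    (hV : ∀ j ℓ, |V j ℓ| ≤ Real.sqrt (L / (min m p : ℝ)))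
    (hU0 : ∀ i (ℓ : Fin (min m p)), k0 ≤ (ℓ : ℕ) → U i ℓ = 0)
    (hV0 : ∀ j (ℓ : Fin (min m p)), k0 ≤ (ℓ : ℕ) → V j ℓ = 0)
    (c : ℝ) (hκc : κ ≤ c)
    (hc : c < (Real.sqrt 2 - 1) * Real.sqrt (L / (min m p : ℝ)))
    (S : Set ((Fin m → Fin (min m p) → ℝ) × (Fin p → Fin (min m p) → ℝ)))
    (hS : S = {x | (∀ i ℓ, |x.1 i ℓ - U i ℓ| ≤ c) ∧ (∀ j ℓ, |x.2 j ℓ - V j ℓ| ≤ c)})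
    (ρ : Measure ((Fin m → Fin (min m p) → ℝ) × (Fin p → Fin (min m p) → ℝ)))
    (hρ : ρ = (pairPrior m p (min m p) L τ κ S)⁻¹ •
      (pairPrior m p (min m p) L τ κ).restrict S) :
    KLdiv ρ (pairPrior m p (min m p) L τ κ) ≤
      2 * ((k0 : ℝ) - 1) * Real.log (1 / τ) + 2 * Real.log (1 / (1 - τ))
        + ((m : ℝ) + (p : ℝ)) * (k0 : ℝ) *
          Real.log ((1 / c) * Real.sqrt (2 * L / (min m p : ℝ))) := by
  rw [← Nat.cast_min] at hU hV hc ⊢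
  obtain ⟨k, rfl⟩ : ∃ k, k0 = k + 1 := ⟨k0 - 1, by omega⟩
  have hc0 : 0 ≤ c := hκ0.trans hκc
  have hs : 0 < Real.sqrt (L / (min m p : ℕ)) :=
    pos_of_mul_pos_right (hc0.trans_lt hc) (by linarith [Real.one_lt_sqrt_two])
  have hL : 0 < L :=
    (div_pos_iff_of_pos_right (Nat.cast_pos.2 (by omega))).1 (Real.sqrt_pos.1 hs)
  have hbox (u : ℝ) (hu : |u| ≤ Real.sqrt (L / (min m p : ℕ))) :
      |u| + c ≤ Real.sqrt (2 * L / (min m p : ℕ)) := by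
    rw [mul_div_assoc, Real.sqrt_mul zero_le_two]
    linarith
  have hbound := neg_log_pairPrior_closedBall_le hL hτ hk0K (by omega) hκ0 hκc
    (fun i ℓ => hbox _ (hU i ℓ)) (fun j ℓ => hbox _ (hV j ℓ)) hU0 hV0
  rw [show ρ = (pairPrior m p (min m p) L τ κ)[|S] from hρ, hS, ← closedBall_prod_pi_eq U V hc0,
    KLdiv_cond_eq_neg_log _ isClosed_closedBall.measurableSet]
  have := mul_nonneg k.cast_nonneg (Real.log_nonneg (one_le_one_div hτ.1 hτ.2.le))
  have := Real.log_nonneg (one_le_one_div (sub_pos.2 hτ.2) (by linarith [hτ.1]))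
  push_cast at hbound ⊢
  linarith

/-- Kullback–Leibler bound for the truncated prior: for `M = UVᵀ` with factors bounded by
`√(L/K)` and only the first `k₀` columns nonzero, and `κ ≤ c < (√2 - 1)√(L/K)`, the measure
`ρ_{U,V,c}` (the prior conditioned on `‖μ - U‖_∞ ≤ c`, `‖ν - V‖_∞ ≤ c`) satisfies
`K(ρ_{U,V,c}, π) ≤ 2(k₀-1)log(1/τ) + 2 log(1/(1-τ)) + (m+p)k₀ log((1/c)√(2L/K))`. -/
theorem kl_truncated_prior_bound
    (m p n : ℕ) (hm : 0 < m) (hp : 0 < p) (hn : 0 < n)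
    (L τ : ℝ) (hL : 0 < L) (hτ : τ ∈ Set.Ioo (0 : ℝ) 1)
    (κ : ℝ) (hκ0 : 0 ≤ κ)
    (hκ : κ ≤ (1 / (n : ℝ)) * Real.sqrt (L / (10 * (min m p : ℝ))))
    (k0 : ℕ) (hk01 : 1 ≤ k0) (hk0K : k0 ≤ min m p)
    (U : Fin m → Fin (min m p) → ℝ) (V : Fin p → Fin (min m p) → ℝ)
    (hU : ∀ i ℓ, |U i ℓ| ≤ Real.sqrt (L / (min m p : ℝ)))
    (hV : ∀ j ℓ, |V j ℓ| ≤ Real.sqrt (L / (min m p : ℝ)))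
    (hU0 : ∀ i (ℓ : Fin (min m p)), k0 ≤ (ℓ : ℕ) → U i ℓ = 0)
    (hV0 : ∀ j (ℓ : Fin (min m p)), k0 ≤ (ℓ : ℕ) → V j ℓ = 0)
    (c : ℝ) (hκc : κ ≤ c)
    (hc : c < (Real.sqrt 2 - 1) * Real.sqrt (L / (min m p : ℝ)))
    (S : Set ((Fin m → Fin (min m p) → ℝ) × (Fin p → Fin (min m p) → ℝ)))
    (hS : S = {x | (∀ i ℓ, |x.1 i ℓ - U i ℓ| ≤ c) ∧ (∀ j ℓ, |x.2 j ℓ - V j ℓ| ≤ c)})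
    (ρ : Measure ((Fin m → Fin (min m p) → ℝ) × (Fin p → Fin (min m p) → ℝ)))
    (hρ : ρ = (pairPrior m p (min m p) L τ κ S)⁻¹ •
      (pairPrior m p (min m p) L τ κ).restrict S) :
    KLdiv ρ (pairPrior m p (min m p) L τ κ) ≤
      2 * ((k0 : ℝ) - 1) * Real.log (1 / τ) + 2 * Real.log (1 / (1 - τ))
        + ((m : ℝ) + (p : ℝ)) * (k0 : ℝ) *
          Real.log ((1 / c) * Real.sqrt (2 * L / (min m p : ℝ))) :=
  kl_truncated_prior_bound_general m p L τ hτ κ hκ0 k0 hk01 hk0K U V hU hV hU0 hV0 c hκc hc S hS ρ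
    hρ
end
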